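/- The dimension of the Maslov quadratic space T(l_1,…,l_n) = K/ker(q) equals (n−2)·(dim V)/2 − Σ_{i∈Z/nZ} dim(l_i ∩ l_{i+1}) + 2·dim(∩_{i∈Z/nZ} l_i). -/

import Mathlib

open Finset LinearMap Module

section Defs

variable {F V : Type} [Field F] [AddCommGroup V] [Module F V]

/-- `B` is a symplectic (non-degenerate alternating) bilinear form on `V`. -/
def IsSymplectic (B : V →ₗ[F] V →ₗ[F] F) : Prop :=
  (∀ x, B x x = 0) ∧ ∀ x : V, (∀ y, B x y = 0) → x = 0

/-- `l` is a Lagrangian subspace for `B` : it is isotropic and maximal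
(equal to its own `B`-orthogonal). -/
def IsLagrangian (B : V →ₗ[F] V →ₗ[F] F) (l : Submodule F V) : Prop :=
  (∀ x ∈ l, ∀ y ∈ l, B x y = 0) ∧ ∀ x : V, (∀ y ∈ l, B x y = 0) → x ∈ l

/-- The bilinear form `q(v,w) = ∑_{n ≥ i ≥ j ≥ 1} B(v_i, w_j)` on `n`-tuples
(indexed by `1,…,n`, modelled as functions `ℕ → V`). -/
noncomputable def mqL (n : ℕ) (B : V →ₗ[F] V →ₗ[F] F) :
    (ℕ → V) →ₗ[F] (ℕ → V) →ₗ[F] F :=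
  ∑ i ∈ Icc 1 n, ∑ j ∈ Icc 1 i,
    B.compl₁₂ (LinearMap.proj i) (LinearMap.proj j)

/-- Membership in `K(l_1,…,l_n) = ker(Σ : ⊕ l_i → V)`: each component lies in the
corresponding Lagrangian and the components sum to zero. -/
def InK (n : ℕ) (l : ℕ → Submodule F V) (v : ℕ → V) : Prop :=
  (∀ i ∈ Icc 1 n, v i ∈ l i) ∧ ∑ i ∈ Icc 1 n, v i = 0

/-- `K(l_1,…,l_n)` as a submodule of `ℕ → V` (components outside `{1,…,n}` vanish). -/
noncomputable def Ksub (n : ℕ) (l : ℕ → Submodule F V) : Submodule F (ℕ → V) :=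
  (Submodule.pi Set.univ fun i => if i ∈ Icc 1 n then l i else ⊥) ⊓
    LinearMap.ker (∑ i ∈ Icc 1 n, (LinearMap.proj i : (ℕ → V) →ₗ[F] V))

/-- Cyclic successor on `{1,…,n}`. -/
def nxt (n i : ℕ) : ℕ := if i = n then 1 else i + 1

/-- Cyclic predecessor on `{1,…,n}`. -/
def prv (n i : ℕ) : ℕ := if i = 1 then n else i - 1

end Defs

section Witt

variable {F M N : Type} [Field F] [AddCommGroup M] [Module F M]
  [AddCommGroup N] [Module F N]

/-- The orthogonal direct sum of two bilinear forms. -/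
noncomputable def prodBF (B₁ : M →ₗ[F] M →ₗ[F] F) (B₂ : N →ₗ[F] N →ₗ[F] F) :
    (M × N) →ₗ[F] (M × N) →ₗ[F] F :=
  B₁.compl₁₂ (LinearMap.fst F M N) (LinearMap.fst F M N) +
    B₂.compl₁₂ (LinearMap.snd F M N) (LinearMap.snd F M N)

/-- Two bilinear spaces are isometric. -/
def FormIsometric (B₁ : M →ₗ[F] M →ₗ[F] F) (B₂ : N →ₗ[F] N →ₗ[F] F) : Prop :=
  ∃ e : M ≃ₗ[F] N, ∀ x y, B₂ (e x) (e y) = B₁ x y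

/-- A hyperbolic quadratic space: a non-degenerate symmetric form admitting a
totally isotropic subspace of half the dimension. -/
def IsHyperbolicForm (B : M →ₗ[F] M →ₗ[F] F) : Prop :=
  (∀ x y, B x y = B y x) ∧ (∀ x : M, (∀ y, B x y = 0) → x = 0) ∧
    ∃ L : Submodule F M, (∀ x ∈ L, ∀ y ∈ L, B x y = 0) ∧
      Module.finrank F M = 2 * Module.finrank F L

/-- Two (non-degenerate symmetric) bilinear spaces represent the same class in the
Witt group `W(F)`: they become isometric after adding hyperbolic spaces. -/
def WittEquiv (B₁ : M →ₗ[F] M →ₗ[F] F) (B₂ : N →ₗ[F] N →ₗ[F] F) : Prop :=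
  ∃ (m₁ m₂ : ℕ) (h₁ : (Fin m₁ → F) →ₗ[F] (Fin m₁ → F) →ₗ[F] F)
    (h₂ : (Fin m₂ → F) →ₗ[F] (Fin m₂ → F) →ₗ[F] F),
    IsHyperbolicForm h₁ ∧ IsHyperbolicForm h₂ ∧
      FormIsometric (prodBF B₁ h₁) (prodBF B₂ h₂)

end Witt

section MoreDefs

variable {F V : Type} [Field F] [AddCommGroup V] [Module F V]

/-- `A` is an anti-derivative of the tuple `w` (cyclically indexed by `1,…,n`):
`A_{{i,i+1}} - A_{{i-1,i}} = w i`, where the edge `{i,i+1}` is indexed by `i`. -/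
def IsAntiDeriv (n : ℕ) (w A : ℕ → V) : Prop :=
  ∀ i ∈ Icc 1 n, A i - A (prv n i) = w i

/-- The natural map `s : K(l_1,…,l_k) ⊕ K(l_1,l_k,…,l_n) → K(l_1,…,l_n)`,
identity on each Lagrangian summand.  Here `v` is a `k`-tuple and `w` an
`(n-k+2)`-tuple whose slots `1, 2, 3, …` correspond to `l_1, l_k, l_{k+1}, …`. -/
def chainS (k : ℕ) (v w : ℕ → V) : ℕ → V := fun i =>
  (if i ≤ k then v i else 0) +
    (if i = 1 then w 1 else if k ≤ i then w (i - k + 2) else 0)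

/-- The sequence `l_1, l_k, l_{k+1}, …, l_n` (of length `n - k + 2`). -/
def chainL (k : ℕ) (l : ℕ → Submodule F V) : ℕ → Submodule F V := fun j =>
  if j = 1 then l 1 else l (k + j - 2)

end MoreDefs

section Aux
variable {F V : Type} [Field F] [AddCommGroup V] [Module F V]

lemma nxt_mem {n i : ℕ} (h : i ∈ Icc 1 n) : nxt n i ∈ Icc 1 n := by
  simp only [mem_Icc] at *; unfold nxt; split <;> omega

lemma prv_mem {n i : ℕ} (h : i ∈ Icc 1 n) : prv n i ∈ Icc 1 n := by
  simp only [mem_Icc] at *; unfold prv; split <;> omega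

lemma nxt_prv {n i : ℕ} (h : i ∈ Icc 1 n) : nxt n (prv n i) = i := by
  simp only [mem_Icc] at h; unfold nxt prv
  rcases eq_or_ne i 1 with rfl | h1
  · rw [if_pos rfl, if_pos rfl]
  · rw [if_neg h1, if_neg (by omega)]; omega

lemma prv_nxt {n i : ℕ} (h : i ∈ Icc 1 n) : prv n (nxt n i) = i := by
  simp only [mem_Icc] at h; unfold nxt prv
  rcases eq_or_ne i n with rfl | h1
  · rw [if_pos rfl, if_pos rfl]
  · rw [if_neg h1, if_neg (by omega)]; omega

lemma mem_Ksub_iff {n : ℕ} {l : ℕ → Submodule F V} {v : ℕ → V} :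
    v ∈ Ksub n l ↔ (∀ i ∈ Icc 1 n, v i ∈ l i) ∧ (∀ i, i ∉ Icc 1 n → v i = 0) ∧
      ∑ i ∈ Icc 1 n, v i = 0 := by
  simp only [Ksub, Submodule.mem_inf, Submodule.mem_pi, Set.mem_univ, forall_true_left,
    LinearMap.mem_ker, LinearMap.sum_apply, LinearMap.proj_apply]
  constructor
  · rintro ⟨h1, h2⟩
    exact ⟨fun i hi => by have := h1 i; rwa [if_pos hi] at this,
      fun i hi => by have := h1 i; rwa [if_neg hi, Submodule.mem_bot] at this, h2⟩
  · rintro ⟨h1, h2, h3⟩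
    refine ⟨fun i => ?_, h3⟩
    by_cases hi : i ∈ Icc 1 n
    · rw [if_pos hi]; exact h1 i hi
    · rw [if_neg hi, Submodule.mem_bot]; exact h2 i hi

lemma mqL_apply {n : ℕ} (B : V →ₗ[F] V →ₗ[F] F) (v w : ℕ → V) :
    mqL n B v w = ∑ i ∈ Icc 1 n, ∑ j ∈ Icc 1 i, B (v i) (w j) := by
  simp [mqL, LinearMap.sum_apply]

lemma mqL_eq_tau {n : ℕ} (B : V →ₗ[F] V →ₗ[F] F) (v w : ℕ → V) :
    mqL n B v w = ∑ j ∈ Icc 1 n, B (∑ i ∈ Icc j n, v i) (w j) := by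
  rw [mqL_apply]
  have h1 : ∀ i ∈ Icc 1 n, ∑ j ∈ Icc 1 i, B (v i) (w j)
      = ∑ j ∈ Icc 1 n, if j ≤ i then B (v i) (w j) else 0 := by
    intro i hi
    rw [← Finset.sum_filter]
    refine Finset.sum_congr ?_ fun _ _ => rfl
    ext j
    simp only [mem_Icc, mem_filter] at *
    omega
  rw [Finset.sum_congr rfl h1, Finset.sum_comm]
  refine Finset.sum_congr rfl fun j hj => ?_
  rw [map_sum, LinearMap.sum_apply, ← Finset.sum_filter]
  refine Finset.sum_congr ?_ fun _ _ => rfl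
  ext i
  simp only [mem_Icc, mem_filter] at *
  omega
end Aux

section Aux2
variable {F V : Type} [Field F] [AddCommGroup V] [Module F V]
variable (n : ℕ) (l : ℕ → Submodule F V)

/-- generic evaluation of a sum of `comp proj` maps on `Pi.single`. -/
lemma sum_comp_proj_single {ι : Type} [Fintype ι] [DecidableEq ι] {M : ι → Type}
    [∀ i, AddCommGroup (M i)] [∀ i, Module F (M i)] {N : Type} [AddCommGroup N] [Module F N]
    (φ : ∀ i, M i →ₗ[F] N) (j : ι) (y : M j) :
    (∑ i, (φ i).comp (LinearMap.proj i)) (Pi.single j y) = φ j y := by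
  rw [LinearMap.sum_apply]
  rw [Finset.sum_eq_single j]
  · simp
  · intro i _ hij
    simp [LinearMap.proj_apply, Pi.single_eq_of_ne hij]
  · simp

noncomputable def embd (m : ℕ → Submodule F V) :
    (∀ i : (Icc 1 n : Finset ℕ), ↥(m i.1)) →ₗ[F] (ℕ → V) where
  toFun w := fun j => if h : j ∈ Icc 1 n then (w ⟨j, h⟩ : V) else 0
  map_add' w w' := by
    funext j
    by_cases h : j ∈ Icc 1 n
    · simp only [Pi.add_apply, dif_pos h, Submodule.coe_add]
    · simp only [Pi.add_apply, dif_neg h, add_zero]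
  map_smul' c w := by
    funext j
    by_cases h : j ∈ Icc 1 n
    · simp only [Pi.smul_apply, dif_pos h, SetLike.val_smul, RingHom.id_apply]
    · simp only [Pi.smul_apply, dif_neg h, smul_zero, RingHom.id_apply]

lemma embd_apply_mem (m : ℕ → Submodule F V) (w) {j : ℕ} (h : j ∈ Icc 1 n) :
    embd n m w j = w ⟨j, h⟩ := dif_pos h

noncomputable def sumMF : (∀ i : (Icc 1 n : Finset ℕ), ↥(l i.1)) →ₗ[F] V :=
  ∑ i : (Icc 1 n : Finset ℕ), (l i.1).subtype.comp (LinearMap.proj i)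

lemma sumMF_apply (w) : sumMF n l w = ∑ i : (Icc 1 n : Finset ℕ), (w i : V) := by
  simp [sumMF, LinearMap.sum_apply]

lemma sumMF_single (j : (Icc 1 n : Finset ℕ)) (y : ↥(l j.1)) :
    sumMF n l (Pi.single j y) = y :=
  sum_comp_proj_single (M := fun i : (Icc 1 n : Finset ℕ) => ↥(l i.1))
    (fun i => (l i.1).subtype) j y

lemma sum_embd (m : ℕ → Submodule F V) (w) :
    ∑ i ∈ Icc 1 n, embd n m w i = ∑ i : (Icc 1 n : Finset ℕ), (w i : V) := by
  rw [← Finset.sum_coe_sort (Icc 1 n) (fun i => embd n m w i)]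
  exact Finset.sum_congr rfl fun i _ => embd_apply_mem n m w i.2

lemma embd_mem_Ksub (w) (hw : w ∈ LinearMap.ker (sumMF n l)) : embd n l w ∈ Ksub n l := by
  rw [mem_Ksub_iff]
  refine ⟨fun i hi => ?_, fun i hi => dif_neg hi, ?_⟩
  · rw [embd_apply_mem n l w hi]; exact (w ⟨i, hi⟩).2
  · rw [sum_embd, ← sumMF_apply]; exact hw

lemma Ksub_eq_map : Ksub n l = Submodule.map (embd n l) (LinearMap.ker (sumMF n l)) := by
  ext v
  constructor
  · intro hv
    rw [mem_Ksub_iff] at hv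
    refine Submodule.mem_map.2 ⟨fun i => ⟨v i.1, hv.1 i.1 i.2⟩, ?_, ?_⟩
    · rw [LinearMap.mem_ker, sumMF_apply, Finset.sum_coe_sort (Icc 1 n) (fun i => v i)]
      exact hv.2.2
    · funext j
      by_cases h : j ∈ Icc 1 n
      · exact embd_apply_mem n l _ h
      · exact (dif_neg h).trans (hv.2.1 j h).symm
  · rintro ⟨w, hw, rfl⟩
    exact embd_mem_Ksub n l w hw

lemma embd_injective (m : ℕ → Submodule F V) : Function.Injective (embd n m) := by
  intro w w' h
  funext i
  have := congrFun h i.1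
  rw [embd_apply_mem n m w i.2, embd_apply_mem n m w' i.2] at this
  ext
  simpa using this

noncomputable def dmap : (∀ i : (Icc 1 n : Finset ℕ), ↥(l i.1 ⊓ l (nxt n i.1))) →ₗ[F] (ℕ → V) where
  toFun u := fun j =>
    if h : j ∈ Icc 1 n then ((u ⟨j, h⟩ : V) - (u ⟨prv n j, prv_mem h⟩ : V)) else 0
  map_add' u u' := by
    funext j
    by_cases h : j ∈ Icc 1 n
    · simp only [Pi.add_apply, dif_pos h, Submodule.coe_add]; abel
    · simp only [Pi.add_apply, dif_neg h, add_zero]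
  map_smul' c u := by
    funext j
    by_cases h : j ∈ Icc 1 n
    · simp only [Pi.smul_apply, dif_pos h, SetLike.val_smul, RingHom.id_apply, smul_sub]
    · simp only [Pi.smul_apply, dif_neg h, smul_zero, RingHom.id_apply]

lemma dmap_apply_mem (u) {j : ℕ} (h : j ∈ Icc 1 n) :
    dmap n l u j = (u ⟨j, h⟩ : V) - (u ⟨prv n j, prv_mem h⟩ : V) := dif_pos h

lemma dmap_apply_not (u) {j : ℕ} (h : j ∉ Icc 1 n) : dmap n l u j = 0 := dif_neg h

lemma sum_prv {M : Type} [AddCommMonoid M] (f : ℕ → M) :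
    ∑ i ∈ Icc 1 n, f (prv n i) = ∑ i ∈ Icc 1 n, f i := by
  apply Finset.sum_nbij' (i := fun a => prv n a) (j := fun a => nxt n a) <;> intros <;>
    first
      | exact prv_mem ‹_› | exact nxt_mem ‹_› | exact nxt_prv ‹_› | exact prv_nxt ‹_› | rfl

lemma dmap_mem_Ksub (u) : dmap n l u ∈ Ksub n l := by
  rw [mem_Ksub_iff]
  refine ⟨fun i hi => ?_, fun i hi => dif_neg hi, ?_⟩
  · rw [dmap_apply_mem n l u hi]
    refine sub_mem (u ⟨i, hi⟩).2.1 ?_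
    have h2 : ((u ⟨prv n i, prv_mem hi⟩ : ↥(l (prv n i) ⊓ l (nxt n (prv n i)))) : V)
        ∈ l (nxt n (prv n i)) := (u ⟨prv n i, prv_mem hi⟩).2.2
    have key : l (nxt n (prv n i)) = l i := by rw [nxt_prv hi]
    exact key ▸ h2
  · set G : ℕ → V := fun j => if h : j ∈ Icc 1 n then (u ⟨j, h⟩ : V) else 0 with hG
    have : ∀ i ∈ Icc 1 n, dmap n l u i = G i - G (prv n i) := by
      intro i hi
      rw [dmap_apply_mem n l u hi, hG]
      simp only [dif_pos hi, dif_pos (prv_mem hi)]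
    rw [Finset.sum_congr rfl this, Finset.sum_sub_distrib, sum_prv, sub_self]

end Aux2

section Aux3
variable {F V : Type} [Field F] [AddCommGroup V] [Module F V]
variable (n : ℕ) (l : ℕ → Submodule F V) (B : V →ₗ[F] V →ₗ[F] F)

/-- telescoping sum over `Icc j n`, `2 ≤ j`. -/
lemma telescope (G : ℕ → V) {j : ℕ} (hj2 : 2 ≤ j) (hjn : j ≤ n) :
    ∑ i ∈ Icc j n, (G i - G (i - 1)) = G n - G (j - 1) := by
  have h1 : ∀ i ∈ Finset.range (n + 1 - j), G (j + i) - G (j + i - 1)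
      = G (j - 1 + (i + 1)) - G (j - 1 + i) := by
    intro i _
    congr 2 <;> omega
  have h2 : ∑ i ∈ Finset.range (n + 1 - j), (G (j - 1 + (i + 1)) - G (j - 1 + i))
      = G (j - 1 + (n + 1 - j)) - G (j - 1 + 0) :=
    Finset.sum_range_sub (fun k => G (j - 1 + k)) (n + 1 - j)
  rw [← Finset.Ico_add_one_right_eq_Icc, Finset.sum_Ico_eq_sum_range, Finset.sum_congr rfl h1, h2]
  congr 2 <;> omega

lemma tau_one {v : ℕ → V} (hv : v ∈ Ksub n l) : ∑ i ∈ Icc 1 n, v i = 0 :=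
  (mem_Ksub_iff.1 hv).2.2

/-- `τ i = v i + τ (nxt n i)` for `i ∈ Icc 1 n`, given `τ 1 = 0`. -/
lemma tau_step {v : ℕ → V} (hv : v ∈ Ksub n l) {i : ℕ} (hi : i ∈ Icc 1 n) :
    ∑ k ∈ Icc i n, v k = v i + ∑ k ∈ Icc (nxt n i) n, v k := by
  simp only [mem_Icc] at hi
  rcases eq_or_ne i n with hin | hin
  · rw [hin]
    have h1 : nxt n n = 1 := if_pos rfl
    rw [h1, Finset.Icc_self, Finset.sum_singleton]
    have h0 := tau_one n l hv
    rw [h0, add_zero]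
  · have h1 : nxt n i = i + 1 := if_neg hin
    rw [h1, Finset.Icc_eq_cons_Ioc (by omega), Finset.sum_cons, ← Finset.Icc_add_one_left_eq_Ioc]

/-- The easy direction: elements of the image of `∂` are in the radical. -/
lemma mqL_dmap_eq_zero (hn : 1 ≤ n)
    (hl : ∀ i ∈ Icc 1 n, IsLagrangian B (l i))
    (u : ∀ i : (Icc 1 n : Finset ℕ), ↥(l i.1 ⊓ l (nxt n i.1)))
    (w : ℕ → V) (hw : w ∈ Ksub n l) : mqL n B (dmap n l u) w = 0 := by
  have hnmem : n ∈ Icc 1 n := by simp [mem_Icc]; omega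
  set un : V := (u ⟨n, hnmem⟩ : V) with hun
  have hun1 : un ∈ l 1 := by
    have h2 : ((u ⟨n, hnmem⟩ : ↥(l n ⊓ l (nxt n n))) : V) ∈ l (nxt n n) := (u ⟨n, hnmem⟩).2.2
    have key : l (nxt n n) = l 1 := by rw [nxt]; simp
    exact key ▸ h2
  set G : ℕ → V := fun j => if h : j ∈ Icc 1 n then (u ⟨j, h⟩ : V) else 0 with hG
  have hGmem : ∀ j ∈ Icc 1 n, G j ∈ l j ⊓ l (nxt n j) := by
    intro j hj
    rw [hG]; simp only [dif_pos hj]; exact (u ⟨j, hj⟩).2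
  have hGn : G n = un := by rw [hG]; simp only [dif_pos hnmem, hun]
  rw [mqL_eq_tau]
  have hterm : ∀ j ∈ Icc 1 n, B (∑ i ∈ Icc j n, dmap n l u i) (w j) = B un (w j) := by
    intro j hj
    simp only [mem_Icc] at hj
    have hwj : w j ∈ l j := (mem_Ksub_iff.1 hw).1 j (by simp [mem_Icc]; omega)
    rcases eq_or_ne j 1 with rfl | hj1
    · have h0 : ∑ i ∈ Icc 1 n, dmap n l u i = 0 := tau_one n l (dmap_mem_Ksub n l u)
      rw [h0, map_zero, LinearMap.zero_apply]
      exact ((hl 1 (by simp [mem_Icc]; omega)).1 un hun1 (w 1) hwj).symm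
    · have hj2 : 2 ≤ j := by omega
      have hsum : ∑ i ∈ Icc j n, dmap n l u i = G n - G (j - 1) := by
        rw [← telescope n G hj2 hj.2]
        refine Finset.sum_congr rfl fun i hi => ?_
        simp only [mem_Icc] at hi
        have hiI : i ∈ Icc 1 n := by simp [mem_Icc]; omega
        have hpv : prv n i = i - 1 := if_neg (by omega)
        have hm1 : i - 1 ∈ Icc 1 n := by simp [mem_Icc]; omega
        have hsub : (⟨prv n i, prv_mem hiI⟩ : {x // x ∈ Icc 1 n}) = ⟨i - 1, hm1⟩ :=
          Subtype.ext hpv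
        rw [dmap_apply_mem n l u hiI, hsub, hG]
        simp only [dif_pos hiI, dif_pos hm1]
      rw [hsum, hGn, map_sub, LinearMap.sub_apply, sub_eq_self]
      -- B (G (j-1)) (w j) = 0 since G (j-1) ∈ l (nxt n (j-1)) = l j
      have hm := (hGmem (j - 1) (by simp [mem_Icc]; omega)).2
      have key : l (nxt n (j - 1)) = l j := by
        rw [nxt, if_neg (by omega)]
        congr 1
        omega
      rw [key] at hm
      exact (hl j (by simp [mem_Icc]; omega)).1 _ hm _ hwj
  rw [Finset.sum_congr rfl hterm, ← map_sum, tau_one n l hw, map_zero]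
end Aux3

section Aux4
variable {F V : Type} [Field F] [AddCommGroup V] [Module F V]
variable (n : ℕ) (l : ℕ → Submodule F V) (B : V →ₗ[F] V →ₗ[F] F)

/-- The hard direction: radical elements are in the image of `∂`. -/
lemma rad_mem_range_dmap [FiniteDimensional F V] (hn : 1 ≤ n) (hB : IsSymplectic B)
    (hl : ∀ i ∈ Icc 1 n, IsLagrangian B (l i)) (v : ℕ → V) (hv : v ∈ Ksub n l)
    (hrad : ∀ w ∈ Ksub n l, mqL n B v w = 0) :
    ∃ u, v = dmap n l u := by
  classical
  set τ : ℕ → V := fun j => ∑ i ∈ Icc j n, v i with hτ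
  -- the functional `g` on `Π ↥(l i)`
  set g : (∀ i : (Icc 1 n : Finset ℕ), ↥(l i.1)) →ₗ[F] F :=
    ∑ j : (Icc 1 n : Finset ℕ), ((B (τ j.1)).comp (l j.1).subtype).comp (LinearMap.proj j)
    with hg
  have hgapply : ∀ w, g w = ∑ j : (Icc 1 n : Finset ℕ), B (τ j.1) (w j : V) := by
    intro w
    rw [hg]
    simp [LinearMap.sum_apply]
  -- `g` vanishes on `ker sumMF`
  have hker : LinearMap.ker (sumMF n l) ≤ LinearMap.ker g := by
    intro w hw
    rw [LinearMap.mem_ker, hgapply]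
    have hK := embd_mem_Ksub n l w hw
    have h0 := hrad _ hK
    rw [mqL_eq_tau] at h0
    rw [← h0, ← Finset.sum_coe_sort (Icc 1 n)
      (fun j => B (∑ i ∈ Icc j n, v i) (embd n l w j))]
    exact Finset.sum_congr rfl fun j _ => by rw [embd_apply_mem n l w j.2]
  -- factor `g` through `sumMF`
  obtain ⟨h, hh⟩ : ∃ h : V →ₗ[F] F, ∀ w, g w = h (sumMF n l w) := by
    set e := (sumMF n l).quotKerEquivRange with he
    set gbar := (LinearMap.ker (sumMF n l)).liftQ g hker with hgbar
    obtain ⟨h, hh'⟩ := LinearMap.exists_extend (gbar.comp e.symm.toLinearMap)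
    refine ⟨h, fun w => ?_⟩
    have h1 : sumMF n l w ∈ LinearMap.range (sumMF n l) := LinearMap.mem_range_self _ w
    have h2 : h (sumMF n l w)
        = (gbar.comp e.symm.toLinearMap) ⟨sumMF n l w, h1⟩ := by
      rw [← hh']
      rfl
    rw [h2]
    have h3 : e.symm ⟨sumMF n l w, h1⟩ = Submodule.Quotient.mk w := by
      rw [LinearEquiv.symm_apply_eq]
      exact Subtype.ext rfl
    simp only [LinearMap.comp_apply, LinearEquiv.coe_coe, h3, hgbar]
    rw [Submodule.liftQ_apply]
  -- the dual vector z
  have hnd : LinearMap.BilinForm.Nondegenerate B :=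
    (LinearMap.IsAlt.isRefl hB.1).nondegenerate_iff_separatingLeft.2 hB.2
  set z : V := (LinearMap.BilinForm.toDual B hnd).symm h with hz
  have hzB : ∀ y, B z y = h y := by
    intro y
    have : LinearMap.BilinForm.toDual B hnd z = h :=
      (LinearMap.BilinForm.toDual B hnd).apply_symm_apply h
    calc B z y = LinearMap.BilinForm.toDual B hnd z y := rfl
    _ = h y := by rw [this]
  -- the key membership
  have key : ∀ j ∈ Icc 1 n, τ j - z ∈ l j := by
    intro j hj
    apply (hl j hj).2
    intro y hy
    have h1 : g (Pi.single (⟨j, hj⟩ : (Icc 1 n : Finset ℕ)) ⟨y, hy⟩) = B (τ j) y :=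
      sum_comp_proj_single (M := fun i : (Icc 1 n : Finset ℕ) => ↥(l i.1))
        (fun i => (B (τ i.1)).comp (l i.1).subtype) ⟨j, hj⟩ ⟨y, hy⟩
    have h2 : sumMF n l (Pi.single (⟨j, hj⟩ : (Icc 1 n : Finset ℕ)) ⟨y, hy⟩) = y :=
      sumMF_single n l ⟨j, hj⟩ ⟨y, hy⟩
    have h3 := hh (Pi.single (⟨j, hj⟩ : (Icc 1 n : Finset ℕ)) ⟨y, hy⟩)
    rw [h1, h2] at h3
    rw [map_sub, LinearMap.sub_apply, h3, hzB y, sub_self]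
  -- memberships of the candidate `u`
  have memA : ∀ i ∈ Icc 1 n, z - τ (nxt n i) ∈ l (nxt n i) := by
    intro i hi
    have := neg_mem (key (nxt n i) (nxt_mem hi))
    rwa [neg_sub] at this
  have hvl : ∀ i ∈ Icc 1 n, v i ∈ l i := (mem_Ksub_iff.1 hv).1
  have memB : ∀ i ∈ Icc 1 n, z - τ (nxt n i) ∈ l i := by
    intro i hi
    have hstep : τ i = v i + τ (nxt n i) := tau_step n l hv hi
    have heq : z - τ (nxt n i) = (z - τ i) + v i := by rw [hstep]; abel
    rw [heq]
    refine add_mem ?_ (hvl i hi)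
    have := neg_mem (key i hi)
    rwa [neg_sub] at this
  refine ⟨fun i => ⟨z - τ (nxt n i.1), Submodule.mem_inf.2 ⟨memB i.1 i.2, memA i.1 i.2⟩⟩, ?_⟩
  funext j
  by_cases hj : j ∈ Icc 1 n
  · rw [dmap_apply_mem n l _ hj]
    show v j = (z - τ (nxt n j)) - (z - τ (nxt n (prv n j)))
    rw [nxt_prv hj]
    have hstep : τ j = v j + τ (nxt n j) := tau_step n l hv hj
    rw [hstep]
    abel
  · rw [dmap_apply_not n l _ hj]
    exact ((mem_Ksub_iff.1 hv).2.1 j hj)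
end Aux4

section Aux5
variable {F V : Type} [Field F] [AddCommGroup V] [Module F V]
variable (n : ℕ) (l : ℕ → Submodule F V) (B : V →ₗ[F] V →ₗ[F] F)

lemma mem_biInf_iff {c : V} : c ∈ (⨅ i ∈ Icc 1 n, l i) ↔ ∀ i ∈ Icc 1 n, c ∈ l i := by
  simp [Submodule.mem_iInf]

noncomputable def cmap :
    ↥(⨅ i ∈ Icc 1 n, l i) →ₗ[F] (∀ i : (Icc 1 n : Finset ℕ), ↥(l i.1 ⊓ l (nxt n i.1))) where
  toFun c := fun i => ⟨c.1, Submodule.mem_inf.2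
    ⟨(mem_biInf_iff n l).1 c.2 i.1 i.2, (mem_biInf_iff n l).1 c.2 (nxt n i.1) (nxt_mem i.2)⟩⟩
  map_add' c c' := rfl
  map_smul' a c := rfl

lemma cmap_injective (hn : 1 ≤ n) : Function.Injective (cmap n l) := by
  intro c c' h
  have h1n : (1 : ℕ) ∈ Icc 1 n := by simp [mem_Icc]; omega
  have := congrFun h ⟨1, h1n⟩
  have h2 := congrArg Subtype.val this
  exact Subtype.ext h2

lemma ker_dmap_eq (hn : 1 ≤ n) : LinearMap.ker (dmap n l) = LinearMap.range (cmap n l) := by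
  have h1n : (1 : ℕ) ∈ Icc 1 n := by simp [mem_Icc]; omega
  ext u
  constructor
  · intro hu
    rw [LinearMap.mem_ker] at hu
    have step : ∀ j (hj : j ∈ Icc 1 n), (u ⟨j, hj⟩ : V) = (u ⟨prv n j, prv_mem hj⟩ : V) := by
      intro j hj
      have := congrFun hu j
      rw [dmap_apply_mem n l u hj] at this
      exact sub_eq_zero.1 this
    set c : V := (u ⟨1, h1n⟩ : V) with hc
    have ceq : ∀ j (hj : j ∈ Icc 1 n), (u ⟨j, hj⟩ : V) = c := by
      intro j
      induction j with
      | zero => intro hj; simp [mem_Icc] at hj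
      | succ m ih =>
        intro hj
        rcases eq_or_ne m 0 with rfl | hm0
        · rw [hc]
        · have hmI : m ∈ Icc 1 n := by simp only [mem_Icc] at hj ⊢; omega
          have hpv : prv n (m + 1) = m := if_neg (by omega)
          have hsub : (⟨prv n (m + 1), prv_mem hj⟩ : {x // x ∈ Icc 1 n}) = ⟨m, hmI⟩ :=
            Subtype.ext hpv
          rw [step (m + 1) hj, hsub, ih hmI]
    have hcmem : c ∈ (⨅ i ∈ Icc 1 n, l i) := by
      rw [mem_biInf_iff]
      intro i hi
      rw [← ceq i hi]
      exact (u ⟨i, hi⟩).2.1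
    refine ⟨⟨c, hcmem⟩, ?_⟩
    funext i
    exact Subtype.ext (ceq i.1 i.2).symm
  · rintro ⟨c, rfl⟩
    rw [LinearMap.mem_ker]
    funext j
    by_cases hj : j ∈ Icc 1 n
    · rw [dmap_apply_mem n l _ hj]
      exact sub_self _
    · exact dmap_apply_not n l _ hj

lemma range_sumMF : LinearMap.range (sumMF n l) = ⨆ i ∈ Icc 1 n, l i := by
  apply le_antisymm
  · rintro _ ⟨w, rfl⟩
    rw [sumMF_apply]
    exact Submodule.sum_mem _ fun i _ => (le_iSup₂ (f := fun i _ => l i) i.1 i.2) (w i).2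
  · refine iSup₂_le fun i hi y hy => ?_
    exact ⟨Pi.single ⟨i, hi⟩ ⟨y, hy⟩, sumMF_single n l ⟨i, hi⟩ ⟨y, hy⟩⟩

section WithB
variable [FiniteDimensional F V]

lemma lag_orth {W : Submodule F V} (hB : IsSymplectic B) (hW : IsLagrangian B W) :
    LinearMap.BilinForm.orthogonal B W = W := by
  have hrefl : LinearMap.IsRefl B := LinearMap.IsAlt.isRefl hB.1
  ext x
  rw [LinearMap.BilinForm.mem_orthogonal_iff]
  constructor
  · intro hx
    exact hW.2 x fun y hy => hrefl y x (hx y hy)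
  · intro hx y hy
    exact hW.1 y hy x hx

lemma lag_finrank {W : Submodule F V} (hB : IsSymplectic B) (hW : IsLagrangian B W) :
    2 * finrank F W = finrank F V := by
  have hrefl : LinearMap.IsRefl B := LinearMap.IsAlt.isRefl hB.1
  have hnd : LinearMap.BilinForm.Nondegenerate B :=
    (LinearMap.IsAlt.isRefl hB.1).nondegenerate_iff_separatingLeft.2 hB.2
  have h1 := LinearMap.BilinForm.finrank_orthogonal hnd W
  rw [lag_orth B hB hW] at h1
  have h2 : finrank F W ≤ finrank F V := Submodule.finrank_le W
  omega

lemma sup_orth (hB : IsSymplectic B) (hl : ∀ i ∈ Icc 1 n, IsLagrangian B (l i)) :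
    LinearMap.BilinForm.orthogonal B (⨆ i ∈ Icc 1 n, l i) = ⨅ i ∈ Icc 1 n, l i := by
  have hrefl : LinearMap.IsRefl B := LinearMap.IsAlt.isRefl hB.1
  ext x
  rw [LinearMap.BilinForm.mem_orthogonal_iff, mem_biInf_iff]
  constructor
  · intro hx i hi
    refine (hl i hi).2 x fun y hy => ?_
    exact hrefl y x (hx y ((le_iSup₂ (f := fun i _ => l i) i hi) hy))
  · intro hx y hy
    have hle : (⨆ i ∈ Icc 1 n, l i) ≤ LinearMap.ker (B.flip x) := by
      refine iSup₂_le fun i hi z hz => ?_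
      rw [LinearMap.mem_ker]
      exact (hl i hi).1 z hz x (hx i hi)
    exact hle hy

lemma sup_add_inf (hB : IsSymplectic B) (hl : ∀ i ∈ Icc 1 n, IsLagrangian B (l i)) :
    finrank F ↥(⨆ i ∈ Icc 1 n, l i) + finrank F ↥(⨅ i ∈ Icc 1 n, l i) = finrank F V := by
  have hrefl : LinearMap.IsRefl B := LinearMap.IsAlt.isRefl hB.1
  have hnd : LinearMap.BilinForm.Nondegenerate B :=
    (LinearMap.IsAlt.isRefl hB.1).nondegenerate_iff_separatingLeft.2 hB.2
  have h1 := LinearMap.BilinForm.finrank_orthogonal hnd (⨆ i ∈ Icc 1 n, l i)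
  rw [sup_orth n l B hB hl] at h1
  have h2 : finrank F ↥(⨆ i ∈ Icc 1 n, l i) ≤ finrank F V := Submodule.finrank_le _
  omega

end WithB
end Aux5

section Final
variable {F V : Type} [Field F] [AddCommGroup V] [Module F V] [FiniteDimensional F V]
variable (n : ℕ) (l : ℕ → Submodule F V) (B : V →ₗ[F] V →ₗ[F] F)

lemma rad_map_eq (hn : 1 ≤ n) (hB : IsSymplectic B)
    (hl : ∀ i ∈ Icc 1 n, IsLagrangian B (l i)) :
    Submodule.map (Ksub n l).subtype
      (LinearMap.ker ((mqL n B).domRestrict₁₂ (Ksub n l) (Ksub n l)))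
      = LinearMap.range (dmap n l) := by
  ext v
  rw [Submodule.mem_map]
  constructor
  · rintro ⟨y, hy, rfl⟩
    rw [LinearMap.mem_ker] at hy
    have hrad : ∀ w ∈ Ksub n l, mqL n B y.1 w = 0 := by
      intro w hw
      have h1 := LinearMap.congr_fun hy ⟨w, hw⟩
      rwa [LinearMap.domRestrict₁₂_apply, LinearMap.zero_apply] at h1
    obtain ⟨u, hu⟩ := rad_mem_range_dmap n l B hn hB hl y.1 y.2 hrad
    exact LinearMap.mem_range.2 ⟨u, hu.symm⟩
  · rintro ⟨u, rfl⟩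
    refine ⟨⟨dmap n l u, dmap_mem_Ksub n l u⟩, ?_, rfl⟩
    rw [LinearMap.mem_ker]
    refine LinearMap.ext fun w => ?_
    rw [LinearMap.domRestrict₁₂_apply, LinearMap.zero_apply]
    exact mqL_dmap_eq_zero n l B hn hl u w.1 w.2

theorem maslov_space_dim'
    (hchar : (2 : F) ≠ 0) (hn : 1 ≤ n)
    (hB : IsSymplectic B)
    (hl : ∀ i ∈ Icc 1 n, IsLagrangian B (l i)) :
    2 * Module.finrank F
        (↥(Ksub n l) ⧸ LinearMap.ker ((mqL n B).domRestrict₁₂ (Ksub n l) (Ksub n l))) +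
      2 * (∑ i ∈ Icc 1 n, Module.finrank F ↥(l i ⊓ l (nxt n i))) +
      2 * Module.finrank F V
    = n * Module.finrank F V + 4 * Module.finrank F ↥(⨅ i ∈ Icc 1 n, l i) := by
  classical
  haveI hfinK : FiniteDimensional F ↥(Ksub n l) := by
    rw [Ksub_eq_map n l]
    exact Module.Finite.equiv
      (Submodule.equivMapOfInjective (embd n l) (embd_injective n l)
        (LinearMap.ker (sumMF n l)))
  have hK : finrank F ↥(Ksub n l) = finrank F ↥(LinearMap.ker (sumMF n l)) := by
    rw [Ksub_eq_map n l]
    exact ((Submodule.equivMapOfInjective (embd n l) (embd_injective n l)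
      (LinearMap.ker (sumMF n l))).finrank_eq).symm
  have hrn1 := LinearMap.finrank_range_add_finrank_ker (sumMF n l)
  have hpi1 : finrank F (∀ i : (Icc 1 n : Finset ℕ), ↥(l i.1))
      = ∑ i ∈ Icc 1 n, finrank F ↥(l i) := by
    rw [Module.finrank_pi_fintype]
    exact Finset.sum_coe_sort (Icc 1 n) (fun i => finrank F ↥(l i))
  have hpi2 : finrank F (∀ i : (Icc 1 n : Finset ℕ), ↥(l i.1 ⊓ l (nxt n i.1)))
      = ∑ i ∈ Icc 1 n, finrank F ↥(l i ⊓ l (nxt n i)) := by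
    rw [Module.finrank_pi_fintype]
    exact Finset.sum_coe_sort (Icc 1 n) (fun i => finrank F ↥(l i ⊓ l (nxt n i)))
  have hrange : finrank F ↥(LinearMap.range (sumMF n l))
      = finrank F ↥(⨆ i ∈ Icc 1 n, l i) := by rw [range_sumMF]
  have hsupinf := sup_add_inf n l B hB hl
  have h2sum : 2 * ∑ i ∈ Icc 1 n, finrank F ↥(l i) = n * finrank F V := by
    rw [Finset.mul_sum,
      Finset.sum_congr rfl (fun i hi => lag_finrank B hB (hl i hi)),
      Finset.sum_const, Nat.card_Icc, smul_eq_mul, Nat.add_sub_cancel]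
  have hrad1 : finrank F
      ↥(LinearMap.ker ((mqL n B).domRestrict₁₂ (Ksub n l) (Ksub n l)))
      = finrank F ↥(LinearMap.range (dmap n l)) := by
    rw [← rad_map_eq n l B hn hB hl]
    exact (Submodule.finrank_map_subtype_eq (Ksub n l) _).symm
  have hrn2 := LinearMap.finrank_range_add_finrank_ker (dmap n l)
  have hkerd : finrank F ↥(LinearMap.ker (dmap n l))
      = finrank F ↥(⨅ i ∈ Icc 1 n, l i) := by
    rw [ker_dmap_eq n l hn]
    exact LinearMap.finrank_range_of_inj (cmap_injective n l hn)
  have hquot := Submodule.finrank_quotient_add_finrank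
    (LinearMap.ker ((mqL n B).domRestrict₁₂ (Ksub n l) (Ksub n l)))
  omega
end Final


/-- `dim T(l_1,…,l_n) = (n−2)·(dim V)/2 − Σ_i dim(l_i ∩ l_{i+1})
+ 2·dim(∩_i l_i)` (stated multiplied by 2 and with all terms moved to be additive,
to stay in `ℕ`). -/
theorem maslov_space_dim
    {F V : Type} [Field F] [AddCommGroup V] [Module F V] [FiniteDimensional F V]
    (hchar : (2 : F) ≠ 0) (n : ℕ) (hn : 1 ≤ n)
    (B : V →ₗ[F] V →ₗ[F] F) (hB : IsSymplectic B)
    (l : ℕ → Submodule F V) (hl : ∀ i ∈ Icc 1 n, IsLagrangian B (l i)) :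
    2 * Module.finrank F
        (↥(Ksub n l) ⧸ LinearMap.ker ((mqL n B).domRestrict₁₂ (Ksub n l) (Ksub n l))) +
      2 * (∑ i ∈ Icc 1 n, Module.finrank F ↥(l i ⊓ l (nxt n i))) +
      2 * Module.finrank F V
    = n * Module.finrank F V + 4 * Module.finrank F ↥(⨅ i ∈ Icc 1 n, l i) :=
  maslov_space_dim' n l B hchar hn hB hl
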